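/- arXiv:2307.01305 — 3 statements merged into one kernel-verified Lean document; each statement's English description precedes it below -/
import Mathlib

section
/- Let P, M : ℝ → Mat(n,n,ℝ) be differentiable matrix-valued functions satisfying Ṗ + AᵀP + PA + Q + P(C Rₑ⁻¹ Cᵀ − B Rₚ⁻¹ Bᵀ)P = 0 and Ṁ + A₁ᵀM + MA₁ − P B Rₚ⁻¹ Bᵀ P − M C Rₑ⁻¹ Cᵀ M = 0, where A₁ = A + C Rₑ⁻¹ Cᵀ P. Assume P and M are symmetric-valued. Then Π := M − P satisfies the autonomous Riccati equation Π̇ + AᵀΠ + ΠA − Q − Π C Rₑ⁻¹ Cᵀ Π = 0. -/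
/-!
Subtracting the Riccati equation of `P` from that of `M`, the `B Rₚ⁻¹ Bᵀ` terms cancel, and
with `S = C Rₑ⁻¹ Cᵀ` the cross terms `P S M + M S P - M S M - P S P` that remain are exactly
`-(M - P) S (M - P)`; this uses `(S P)ᵀ = P S`, i.e. symmetry of `P` and `S`.
-/

open Matrix

namespace Matrix

variable {l n α : Type*}

theorem isSymm_mul_mul_transpose [Fintype l] [CommSemiring α] {R : Matrix l l α} (hR : R.IsSymm)
    (C : Matrix n l α) : (C * R * Cᵀ).IsSymm := by
  simp only [IsSymm, transpose_mul, transpose_transpose, hR.eq, Matrix.mul_assoc]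

theorem riccati_sub_riccati [Fintype n] [CommRing α] (A Q S G P M P' M' : Matrix n n α)
    (hP : P.IsSymm) (hS : S.IsSymm) :
    (M' - P') + Aᵀ * (M - P) + (M - P) * A - Q - (M - P) * S * (M - P)
      = (M' + (A + S * P)ᵀ * M + M * (A + S * P) - P * G * P - M * S * M)
        - (P' + Aᵀ * P + P * A + Q + P * (S - G) * P) := by
  simp only [transpose_add, transpose_mul, hP.eq, hS.eq, sub_mul, mul_sub, mul_add, add_mul,
    Matrix.mul_assoc]
  abel

end Matrix

theorem stmt6_general {n m k : ℕ}
    (A : Matrix (Fin n) (Fin n) ℝ) (B : Matrix (Fin n) (Fin m) ℝ)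
    (C : Matrix (Fin n) (Fin k) ℝ) (Q : Matrix (Fin n) (Fin n) ℝ)
    (Rₚ : Matrix (Fin m) (Fin m) ℝ) (Rₑ : Matrix (Fin k) (Fin k) ℝ)
    (hReSymm : Rₑ.IsSymm)
    (P P' M M' : ℝ → Matrix (Fin n) (Fin n) ℝ)
    (hPsym : ∀ t, (P t).IsSymm)
    (hP : ∀ t, ∀ i j, HasDerivAt (fun s => P s i j) (P' t i j) t)
    (hM : ∀ t, ∀ i j, HasDerivAt (fun s => M s i j) (M' t i j) t)
    (hPric : ∀ t, P' t + Aᵀ * P t + P t * A + Q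
        + P t * (C * Rₑ⁻¹ * Cᵀ - B * Rₚ⁻¹ * Bᵀ) * P t = 0)
    (hMric : ∀ t, M' t + (A + C * Rₑ⁻¹ * Cᵀ * P t)ᵀ * M t + M t * (A + C * Rₑ⁻¹ * Cᵀ * P t)
        - P t * B * Rₚ⁻¹ * Bᵀ * P t - M t * C * Rₑ⁻¹ * Cᵀ * M t = 0) :
    ∀ t, (∀ i j, HasDerivAt (fun s => (M s - P s) i j) ((M' t - P' t) i j) t)
      ∧ (M' t - P' t) + Aᵀ * (M t - P t) + (M t - P t) * A - Q
          - (M t - P t) * C * Rₑ⁻¹ * Cᵀ * (M t - P t) = 0 := by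
  intro t
  refine ⟨fun i j => (hM t i j).sub (hP t i j), ?_⟩
  have hdiff := riccati_sub_riccati A Q (C * Rₑ⁻¹ * Cᵀ) (B * Rₚ⁻¹ * Bᵀ) (P t) (M t) (P' t)
    (M' t) (hPsym t) (isSymm_mul_mul_transpose hReSymm.inv C)
  simp only [Matrix.mul_assoc] at hdiff hMric hPric ⊢
  rw [hdiff, hMric, hPric, sub_zero]

/-- `Π = M − P` satisfies the autonomous Riccati equation
`Π̇ + AᵀΠ + ΠA − Q − Π C Rₑ⁻¹ Cᵀ Π = 0`. -/
theorem stmt6 {n m k : ℕ}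
    (A : Matrix (Fin n) (Fin n) ℝ) (B : Matrix (Fin n) (Fin m) ℝ)
    (C : Matrix (Fin n) (Fin k) ℝ) (Q : Matrix (Fin n) (Fin n) ℝ)
    (Rₚ : Matrix (Fin m) (Fin m) ℝ) (Rₑ : Matrix (Fin k) (Fin k) ℝ)
    (hQ : Q.IsSymm) (hRp : Rₚ.PosDef) (hRe : Rₑ.PosDef)
    (hRpSymm : Rₚ.IsSymm) (hReSymm : Rₑ.IsSymm)
    (P P' M M' : ℝ → Matrix (Fin n) (Fin n) ℝ)
    (hPsym : ∀ t, (P t).IsSymm) (hMsym : ∀ t, (M t).IsSymm)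
    (hP : ∀ t, ∀ i j, HasDerivAt (fun s => P s i j) (P' t i j) t)
    (hM : ∀ t, ∀ i j, HasDerivAt (fun s => M s i j) (M' t i j) t)
    (hPric : ∀ t, P' t + Aᵀ * P t + P t * A + Q
        + P t * (C * Rₑ⁻¹ * Cᵀ - B * Rₚ⁻¹ * Bᵀ) * P t = 0)
    (hMric : ∀ t, M' t + (A + C * Rₑ⁻¹ * Cᵀ * P t)ᵀ * M t + M t * (A + C * Rₑ⁻¹ * Cᵀ * P t)
        - P t * B * Rₚ⁻¹ * Bᵀ * P t - M t * C * Rₑ⁻¹ * Cᵀ * M t = 0) :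
    ∀ t, (∀ i j, HasDerivAt (fun s => (M s - P s) i j) ((M' t - P' t) i j) t)
      ∧ (M' t - P' t) + Aᵀ * (M t - P t) + (M t - P t) * A - Q
          - (M t - P t) * C * Rₑ⁻¹ * Cᵀ * (M t - P t) = 0 :=
  stmt6_general A B C Q Rₚ Rₑ hReSymm P P' M M' hPsym hP hM hPric hMric
end

section
/- Under the hypotheses of the previous statement (e(a)=0, ė = A₁e + Cw, M solves the Riccati equation with M(b)=0 and no escape time on [a,b]), the supremum over continuous w of ∫ₐᵇ (eᵀ S e − wᵀ Rₑ w) dt equals 0, and it is attained by w ≡ 0 (which yields e ≡ 0). -/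
/-!
Along a trajectory `ė = A₁ e + C w`, the storage function `V t = e tᵀ M t e t` satisfies, by the
Riccati equation and completion of squares,
`V' = eᵀ S e - wᵀ Rₑ w + (w + Rₑ⁻¹ Cᵀ M e)ᵀ Rₑ (w + Rₑ⁻¹ Cᵀ M e) ≥ eᵀ S e - wᵀ Rₑ w`.
Integrating, the cost is at most `V b - V a = 0`, since `M b = 0` and `e a = 0`;
the input `w ≡ 0` with `e ≡ 0` has cost `0`.
-/

open Matrix Set

section Riccati

variable {ι κ : Type*} [Fintype ι] [Fintype κ]

theorem riccati_completion_of_squares {R : Type*} [CommRing R] [DecidableEq κ]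
    {A M N S : Matrix ι ι R} {B : Matrix κ κ R} {C : Matrix ι κ R}
    (hM : M.IsSymm) (hB : B.IsSymm) (hBinv : B * B⁻¹ = 1)
    (hric : N + Aᵀ * M + M * A - S - M * C * B⁻¹ * Cᵀ * M = 0) (x : ι → R) (u : κ → R) :
    (A *ᵥ x + C *ᵥ u) ⬝ᵥ (M *ᵥ x) + x ⬝ᵥ (N *ᵥ x) + x ⬝ᵥ (M *ᵥ (A *ᵥ x + C *ᵥ u)) =
      x ⬝ᵥ (S *ᵥ x) - u ⬝ᵥ (B *ᵥ u) +
        (u + B⁻¹ *ᵥ Cᵀ *ᵥ M *ᵥ x) ⬝ᵥ (B *ᵥ (u + B⁻¹ *ᵥ Cᵀ *ᵥ M *ᵥ x)) := by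
  have hN : N = S + M * C * B⁻¹ * Cᵀ * M - Aᵀ * M - M * A := by
    rw [← sub_eq_zero, ← hric]; abel
  set q := Cᵀ *ᵥ M *ᵥ x
  set v := B⁻¹ *ᵥ q
  have hBv : B *ᵥ v = q := by rw [mulVec_mulVec, hBinv, one_mulVec]
  have hMswap : ∀ y, x ⬝ᵥ (M *ᵥ y) = y ⬝ᵥ (M *ᵥ x) := fun y => by
    rw [← dotProduct_transpose_mulVec, hM.eq]
  have hvBu : v ⬝ᵥ (B *ᵥ u) = u ⬝ᵥ q := by
    rw [← hBv, ← dotProduct_transpose_mulVec, hB.eq]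
  have hCq : ∀ y, (C *ᵥ y) ⬝ᵥ (M *ᵥ x) = y ⬝ᵥ q := fun y => by
    rw [dotProduct_comm, ← dotProduct_transpose_mulVec]
  have hA : (A *ᵥ x) ⬝ᵥ (M *ᵥ x) = x ⬝ᵥ ((Aᵀ * M) *ᵥ x) := by
    rw [← mulVec_mulVec, dotProduct_comm, ← dotProduct_transpose_mulVec]
  have hMC : x ⬝ᵥ ((M * C) *ᵥ u) = u ⬝ᵥ q := by rw [← mulVec_mulVec, hMswap, hCq]
  have hSq : x ⬝ᵥ ((M * C * B⁻¹ * Cᵀ * M) *ᵥ x) = v ⬝ᵥ q := by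
    have hv : (M * C * B⁻¹ * Cᵀ * M) *ᵥ x = M *ᵥ C *ᵥ v := by
      simp only [v, q, mulVec_mulVec, Matrix.mul_assoc]
    rw [hv, hMswap, hCq]
  simp only [hN, add_mulVec, sub_mulVec, mulVec_add, mulVec_mulVec, dotProduct_add,
    add_dotProduct, dotProduct_sub, hBv, hvBu, hCq, hA, hSq, hMC]
  ring

theorem hasDerivAt_dotProduct_mulVec {𝕜 : Type*} [NontriviallyNormedField 𝕜] {x : 𝕜 → ι → 𝕜}
    {x' : ι → 𝕜} {M : 𝕜 → Matrix ι ι 𝕜} {M' : Matrix ι ι 𝕜} {t : 𝕜}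
    (hx : ∀ i, HasDerivAt (fun s => x s i) (x' i) t)
    (hM : ∀ i j, HasDerivAt (fun s => M s i j) (M' i j) t) :
    HasDerivAt (fun s => x s ⬝ᵥ (M s *ᵥ x s))
      (x' ⬝ᵥ (M t *ᵥ x t) + x t ⬝ᵥ (M' *ᵥ x t) + x t ⬝ᵥ (M t *ᵥ x')) t := by
  have h : HasDerivAt (fun s => ∑ i, x s i * ∑ j, M s i j * x s j)
      (∑ i, (x' i * ∑ j, M t i j * x t j + x t i * ∑ j, (M' i j * x t j + M t i j * x' j))) t :=
    HasDerivAt.fun_sum fun i _ => (hx i).mul (HasDerivAt.fun_sum fun j _ => (hM i j).mul (hx j))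
  refine h.congr_deriv ?_
  simp only [dotProduct, mulVec, Finset.sum_add_distrib, Finset.mul_sum, mul_add]
  ring

theorem integral_cost_le_of_riccati [DecidableEq κ] {a b : ℝ} (hab : a ≤ b)
    {A S M M' : ℝ → Matrix ι ι ℝ} {B : Matrix κ κ ℝ} {C : Matrix ι κ ℝ}
    {x : ℝ → ι → ℝ} {u : ℝ → κ → ℝ}
    (hS : ∀ i j, ContinuousOn (fun t => S t i j) (Icc a b)) (hB : B.PosDef)
    (hMsymm : ∀ t ∈ Icc a b, (M t).IsSymm)
    (hM : ∀ t ∈ Icc a b, ∀ i j, HasDerivAt (fun s => M s i j) (M' t i j) t)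
    (hric : ∀ t ∈ Icc a b,
      M' t + (A t)ᵀ * M t + M t * A t - S t - M t * C * B⁻¹ * Cᵀ * M t = 0)
    (hu : ∀ i, ContinuousOn (fun t => u t i) (Icc a b))
    (hx : ∀ t ∈ Icc a b, ∀ i, HasDerivAt (fun s => x s i) ((A t *ᵥ x t + C *ᵥ u t) i) t) :
    ∫ t in a..b, (x t ⬝ᵥ (S t *ᵥ x t) - u t ⬝ᵥ (B *ᵥ u t)) ≤
      x b ⬝ᵥ (M b *ᵥ x b) - x a ⬝ᵥ (M a *ᵥ x a) := by
  have hBinv : B * B⁻¹ = 1 := mul_nonsing_inv B ((isUnit_iff_isUnit_det B).mp hB.isUnit)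
  have hV : ∀ t ∈ Icc a b, HasDerivAt (fun s => x s ⬝ᵥ (M s *ᵥ x s))
      (x t ⬝ᵥ (S t *ᵥ x t) - u t ⬝ᵥ (B *ᵥ u t) +
        (u t + B⁻¹ *ᵥ Cᵀ *ᵥ M t *ᵥ x t) ⬝ᵥ (B *ᵥ (u t + B⁻¹ *ᵥ Cᵀ *ᵥ M t *ᵥ x t))) t :=
    fun t ht => riccati_completion_of_squares (hMsymm t ht)
      (isHermitian_iff_isSymm.mp hB.isHermitian) hBinv (hric t ht) (x t) (u t) ▸
        hasDerivAt_dotProduct_mulVec (hx t ht) (hM t ht)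
  have hxc : ∀ i, ContinuousOn (fun t => x t i) (Icc a b) := fun i t ht =>
    (hx t ht i).continuousAt.continuousWithinAt
  have hcost : ContinuousOn (fun t => x t ⬝ᵥ (S t *ᵥ x t) - u t ⬝ᵥ (B *ᵥ u t)) (Icc a b) := by
    simp only [dotProduct, mulVec]
    fun_prop
  exact intervalIntegral.integral_le_sub_of_hasDeriv_right_of_le hab
    (fun t ht => (hV t ht).continuousAt.continuousWithinAt)
    (fun t ht => (hV t (Ioo_subset_Icc_self ht)).hasDerivWithinAt)
    hcost.integrableOn_Icc
    (fun t _ => le_add_of_nonneg_right (hB.posSemidef.dotProduct_mulVec_nonneg _))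

end Riccati

theorem stmt10_general {n k : ℕ} (a b : ℝ) (hab : a ≤ b)
    (A₁ : ℝ → Matrix (Fin n) (Fin n) ℝ) (C : Matrix (Fin n) (Fin k) ℝ)
    (Rₑ : Matrix (Fin k) (Fin k) ℝ) (S : ℝ → Matrix (Fin n) (Fin n) ℝ)
    (M M' : ℝ → Matrix (Fin n) (Fin n) ℝ)
    (hS : ∀ i j, Continuous fun t => S t i j)
    (hRe : Rₑ.PosDef)
    (hMsym : ∀ t, (M t).IsSymm)
    (hM : ∀ t ∈ Set.Icc a b, ∀ i j, HasDerivAt (fun s => M s i j) (M' t i j) t)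
    (hMric : ∀ t ∈ Set.Icc a b,
      M' t + (A₁ t)ᵀ * M t + M t * A₁ t - S t - M t * C * Rₑ⁻¹ * Cᵀ * M t = 0)
    (hMb : M b = 0) :
    IsGreatest {J : ℝ | ∃ w : ℝ → Fin k → ℝ, ∃ e : ℝ → Fin n → ℝ,
        (∀ i, Continuous fun t => w t i) ∧ e a = 0 ∧
        (∀ t ∈ Set.Icc a b, ∀ i,
          HasDerivAt (fun s => e s i) ((A₁ t *ᵥ e t + C *ᵥ w t) i) t) ∧
        J = ∫ t in a..b, (e t ⬝ᵥ (S t *ᵥ e t) - w t ⬝ᵥ (Rₑ *ᵥ w t))} 0 := by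
  refine ⟨⟨0, 0, fun _ => continuous_const, rfl, fun t _ _ => ?_, by simp⟩, ?_⟩
  · simpa using hasDerivAt_const t (0 : ℝ)
  · rintro J ⟨w, e, hw, hea, he, rfl⟩
    calc _ ≤ e b ⬝ᵥ (M b *ᵥ e b) - e a ⬝ᵥ (M a *ᵥ e a) :=
          integral_cost_le_of_riccati hab (fun i j => (hS i j).continuousOn) hRe
            (fun t _ => hMsym t) hM hMric (fun i => (hw i).continuousOn) he
      _ = 0 := by simp [hMb, hea]

/-- the supremum over continuous deviations `w` of the deviation cost
is `0`, attained by `w ≡ 0`. -/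
theorem stmt10 {n k : ℕ} (a b : ℝ) (hab : a ≤ b)
    (A₁ : ℝ → Matrix (Fin n) (Fin n) ℝ) (C : Matrix (Fin n) (Fin k) ℝ)
    (Rₑ : Matrix (Fin k) (Fin k) ℝ) (S : ℝ → Matrix (Fin n) (Fin n) ℝ)
    (M M' : ℝ → Matrix (Fin n) (Fin n) ℝ)
    (hA₁ : ∀ i j, Continuous fun t => A₁ t i j)
    (hS : ∀ i j, Continuous fun t => S t i j)
    (hSsym : ∀ t, (S t).PosSemidef)
    (hRe : Rₑ.PosDef) (hReSymm : Rₑ.IsSymm)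
    (hMsym : ∀ t, (M t).IsSymm)
    (hM : ∀ t ∈ Set.Icc a b, ∀ i j, HasDerivAt (fun s => M s i j) (M' t i j) t)
    (hMric : ∀ t ∈ Set.Icc a b,
      M' t + (A₁ t)ᵀ * M t + M t * A₁ t - S t - M t * C * Rₑ⁻¹ * Cᵀ * M t = 0)
    (hMb : M b = 0) :
    IsGreatest {J : ℝ | ∃ w : ℝ → Fin k → ℝ, ∃ e : ℝ → Fin n → ℝ,
        (∀ i, Continuous fun t => w t i) ∧ e a = 0 ∧
        (∀ t ∈ Set.Icc a b, ∀ i,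
          HasDerivAt (fun s => e s i) ((A₁ t *ᵥ e t + C *ᵥ w t) i) t) ∧
        J = ∫ t in a..b, (e t ⬝ᵥ (S t *ᵥ e t) - w t ⬝ᵥ (Rₑ *ᵥ w t))} 0 :=
  stmt10_general a b hab A₁ C Rₑ S M M' hS hRe hMsym hM hMric hMb
end

section
/- Let P : [t₀, t_f] → Mat(n,n,ℝ) be a symmetric solution of Ṗ + AᵀP + PA + Q + P(C Rₑ⁻¹ Cᵀ − B Rₚ⁻¹ Bᵀ)P = 0, P(t_f) = Q_f. Let x : [t₀, t_f] → ℝⁿ satisfy ẋ = Ax + B u_p + C u_e. Then the payoff ∫_{t₀}^{t_f} (xᵀQx + u_pᵀRₚu_p − u_eᵀRₑu_e) dt + x(t_f)ᵀQ_f x(t_f) equals x(t₀)ᵀP(t₀)x(t₀) + ∫_{t₀}^{t_f} ‖u_p + Rₚ⁻¹BᵀPx‖²_{Rₚ} dt − ∫_{t₀}^{t_f} ‖u_e − Rₑ⁻¹CᵀPx‖²_{Rₑ} dt. -/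
/-! Along a trajectory, `V t = x tᵀ P t x t` has derivative `ẋᵀPx + xᵀṖx + xᵀPẋ`. Substituting the
dynamics for `ẋ` and the Riccati equation for `Ṗ`, and completing the squares in `u_p` and `u_e`,
the running payoff plus `V̇` becomes `‖u_p + Rₚ⁻¹BᵀPx‖²_{Rₚ} - ‖u_e - Rₑ⁻¹CᵀPx‖²_{Rₑ}`.
Integrating over `[t₀, t_f]` and using `P t_f = Q_f` gives the identity. -/

open Matrix Set

section Derivatives

variable {ι κ : Type*} [Fintype κ] {t : ℝ}

theorem hasDerivAt_dotProduct {u v : ℝ → κ → ℝ} {u' v' : κ → ℝ}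
    (hu : ∀ i, HasDerivAt (fun s => u s i) (u' i) t)
    (hv : ∀ i, HasDerivAt (fun s => v s i) (v' i) t) :
    HasDerivAt (fun s => u s ⬝ᵥ v s) (u' ⬝ᵥ v t + u t ⬝ᵥ v') t := by
  refine (HasDerivAt.fun_sum (u := Finset.univ) fun i _ => (hu i).fun_mul (hv i)).congr_deriv ?_
  simp only [dotProduct, Finset.sum_add_distrib]

theorem hasDerivAt_mulVec {M : ℝ → Matrix ι κ ℝ} {M' : Matrix ι κ ℝ} {v : ℝ → κ → ℝ}
    {v' : κ → ℝ} (hM : ∀ i j, HasDerivAt (fun s => M s i j) (M' i j) t)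
    (hv : ∀ i, HasDerivAt (fun s => v s i) (v' i) t) (i : ι) :
    HasDerivAt (fun s => (M s *ᵥ v s) i) ((M' *ᵥ v t + M t *ᵥ v') i) t :=
  hasDerivAt_dotProduct (hM i) hv

end Derivatives

theorem integral_add_eq_add_integral_sub_integral {a b : ℝ} (hab : a ≤ b)
    {f g₁ g₂ V V' : ℝ → ℝ} (hV : ∀ t ∈ Icc a b, HasDerivAt V (V' t) t)
    (hbalance : ∀ t ∈ Icc a b, f t + V' t = g₁ t - g₂ t) (hf : ContinuousOn f (Icc a b))
    (hg₁ : ContinuousOn g₁ (Icc a b)) (hg₂ : ContinuousOn g₂ (Icc a b)) :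
    (∫ t in a..b, f t) + V b = V a + (∫ t in a..b, g₁ t) - ∫ t in a..b, g₂ t := by
  rw [← uIcc_of_le hab] at hV hbalance hf hg₁ hg₂
  have hFTC := intervalIntegral.integral_eq_sub_of_hasDerivAt
    (fun t ht => (hV t ht).congr_deriv (eq_sub_of_add_eq' (hbalance t ht)))
    ((hg₁.intervalIntegrable.sub hg₂.intervalIntegrable).sub hf.intervalIntegrable)
  rw [intervalIntegral.integral_sub (hg₁.intervalIntegrable.sub hg₂.intervalIntegrable)
    hf.intervalIntegrable, intervalIntegral.integral_sub hg₁.intervalIntegrable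
    hg₂.intervalIntegrable] at hFTC
  linarith

section CompletingSquares

variable {ι μ κ : Type*} [Fintype ι] [Fintype μ] [Fintype κ]

theorem dotProduct_mulVec_transpose (M : Matrix ι μ ℝ) (v : μ → ℝ) (w : ι → ℝ) :
    (M *ᵥ v) ⬝ᵥ w = v ⬝ᵥ (Mᵀ *ᵥ w) := by
  rw [dotProduct_transpose_mulVec, dotProduct_comm]

theorem Matrix.IsSymm.dotProduct_mulVec_comm {R : Matrix μ μ ℝ} (hR : R.IsSymm) (v w : μ → ℝ) :
    v ⬝ᵥ (R *ᵥ w) = w ⬝ᵥ (R *ᵥ v) := by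
  simpa only [hR.eq] using dotProduct_transpose_mulVec R v w

theorem dotProduct_mulVec_add_feedback [DecidableEq μ] {R : Matrix μ μ ℝ} (hR : R.IsSymm)
    (hRU : IsUnit R.det) (B : Matrix ι μ ℝ) {P : Matrix ι ι ℝ} (hP : P.IsSymm)
    (p : μ → ℝ) (v : ι → ℝ) :
    (p + (R⁻¹ * Bᵀ * P) *ᵥ v) ⬝ᵥ (R *ᵥ (p + (R⁻¹ * Bᵀ * P) *ᵥ v))
      = p ⬝ᵥ (R *ᵥ p) + 2 * ((B *ᵥ p) ⬝ᵥ (P *ᵥ v)) + v ⬝ᵥ ((P * B * R⁻¹ * Bᵀ * P) *ᵥ v) := by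
  set K := R⁻¹ * Bᵀ * P
  have hRK : R * K = Bᵀ * P := by
    rw [← Matrix.mul_assoc, mul_nonsing_inv_cancel_left _ _ hRU]
  have hKt : Kᵀ = P * B * R⁻¹ := by
    rw [transpose_mul, transpose_mul, transpose_nonsing_inv, hR.eq, hP.eq, transpose_transpose,
      Matrix.mul_assoc]
  calc _ = p ⬝ᵥ (R *ᵥ p) + 2 * (p ⬝ᵥ (R *ᵥ K *ᵥ v)) + K *ᵥ v ⬝ᵥ (R *ᵥ K *ᵥ v) := by
        rw [mulVec_add, dotProduct_add, add_dotProduct, add_dotProduct,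
          hR.dotProduct_mulVec_comm (K *ᵥ v) p]
        ring
    _ = _ := by
        rw [mulVec_mulVec, hRK, ← mulVec_mulVec, ← dotProduct_mulVec_transpose,
          dotProduct_mulVec_transpose K, mulVec_mulVec, mulVec_mulVec, hKt]

theorem cost_add_deriv_eq_of_riccati [DecidableEq μ] [DecidableEq κ]
    (A : Matrix ι ι ℝ) (B : Matrix ι μ ℝ) (C : Matrix ι κ ℝ) (Q : Matrix ι ι ℝ)
    {Rₚ : Matrix μ μ ℝ} {Rₑ : Matrix κ κ ℝ} (hRp : Rₚ.IsSymm) (hRe : Rₑ.IsSymm)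
    (hRpU : IsUnit Rₚ.det) (hReU : IsUnit Rₑ.det) {P P' : Matrix ι ι ℝ} (hP : P.IsSymm)
    (hric : P' + Aᵀ * P + P * A + Q + P * (C * Rₑ⁻¹ * Cᵀ - B * Rₚ⁻¹ * Bᵀ) * P = 0)
    (v : ι → ℝ) (p : μ → ℝ) (e : κ → ℝ) :
    v ⬝ᵥ (Q *ᵥ v) + p ⬝ᵥ (Rₚ *ᵥ p) - e ⬝ᵥ (Rₑ *ᵥ e)
      + ((A *ᵥ v + B *ᵥ p + C *ᵥ e) ⬝ᵥ (P *ᵥ v)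
        + v ⬝ᵥ (P' *ᵥ v + P *ᵥ (A *ᵥ v + B *ᵥ p + C *ᵥ e)))
    = (p + (Rₚ⁻¹ * Bᵀ * P) *ᵥ v) ⬝ᵥ (Rₚ *ᵥ (p + (Rₚ⁻¹ * Bᵀ * P) *ᵥ v))
      - (e - (Rₑ⁻¹ * Cᵀ * P) *ᵥ v) ⬝ᵥ (Rₑ *ᵥ (e - (Rₑ⁻¹ * Cᵀ * P) *ᵥ v)) := by
  -- the evader's square is the pursuer's one with `B` replaced by `-C`
  have hsq_e := dotProduct_mulVec_add_feedback hRe hReU (-C) hP e v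
  simp only [transpose_neg, Matrix.mul_neg, Matrix.neg_mul, neg_mulVec, ← sub_eq_add_neg,
    neg_dotProduct, neg_neg] at hsq_e
  have hquad := congrArg (fun M => v ⬝ᵥ (M *ᵥ v)) hric
  simp only [add_mulVec, sub_mulVec, Matrix.mul_sub, Matrix.sub_mul, dotProduct_add,
    dotProduct_sub, zero_mulVec, dotProduct_zero] at hquad
  rw [dotProduct_mulVec_add_feedback hRp hRpU B hP, hsq_e, dotProduct_add,
    hP.dotProduct_mulVec_comm v]
  simp only [add_dotProduct, ← mulVec_mulVec] at hquad ⊢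
  rw [hP.dotProduct_mulVec_comm v (A *ᵥ v)] at hquad
  rw [dotProduct_mulVec_transpose A] at hquad ⊢
  linarith

end CompletingSquares

theorem stmt12_general {n m k : ℕ} (t₀ t_f : ℝ) (h : t₀ ≤ t_f)
    (A : Matrix (Fin n) (Fin n) ℝ) (B : Matrix (Fin n) (Fin m) ℝ)
    (C : Matrix (Fin n) (Fin k) ℝ)
    (Q Q_f : Matrix (Fin n) (Fin n) ℝ)
    (Rₚ : Matrix (Fin m) (Fin m) ℝ) (Rₑ : Matrix (Fin k) (Fin k) ℝ)
    (hRp : Rₚ.PosDef) (hRe : Rₑ.PosDef)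
    (hRpSymm : Rₚ.IsSymm) (hReSymm : Rₑ.IsSymm)
    (P P' : ℝ → Matrix (Fin n) (Fin n) ℝ)
    (hPsym : ∀ t, (P t).IsSymm)
    (hP : ∀ t ∈ Set.Icc t₀ t_f, ∀ i j, HasDerivAt (fun s => P s i j) (P' t i j) t)
    (hPric : ∀ t ∈ Set.Icc t₀ t_f, P' t + Aᵀ * P t + P t * A + Q
        + P t * (C * Rₑ⁻¹ * Cᵀ - B * Rₚ⁻¹ * Bᵀ) * P t = 0)
    (hPtf : P t_f = Q_f)
    (x : ℝ → Fin n → ℝ) (u_p : ℝ → Fin m → ℝ) (u_e : ℝ → Fin k → ℝ)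
    (hup : ∀ i, Continuous fun t => u_p t i)
    (hue : ∀ i, Continuous fun t => u_e t i)
    (hx : ∀ t ∈ Set.Icc t₀ t_f, ∀ i,
      HasDerivAt (fun s => x s i) ((A *ᵥ x t + B *ᵥ u_p t + C *ᵥ u_e t) i) t) :
    (∫ t in t₀..t_f, (x t ⬝ᵥ (Q *ᵥ x t) + u_p t ⬝ᵥ (Rₚ *ᵥ u_p t)
        - u_e t ⬝ᵥ (Rₑ *ᵥ u_e t))) + x t_f ⬝ᵥ (Q_f *ᵥ x t_f)
    = x t₀ ⬝ᵥ (P t₀ *ᵥ x t₀)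
      + (∫ t in t₀..t_f, ((u_p t + (Rₚ⁻¹ * Bᵀ * P t) *ᵥ x t)
          ⬝ᵥ (Rₚ *ᵥ (u_p t + (Rₚ⁻¹ * Bᵀ * P t) *ᵥ x t))))
      - ∫ t in t₀..t_f, ((u_e t - (Rₑ⁻¹ * Cᵀ * P t) *ᵥ x t)
          ⬝ᵥ (Rₑ *ᵥ (u_e t - (Rₑ⁻¹ * Cᵀ * P t) *ᵥ x t))) := by
  have hxc : ContinuousOn x (Icc t₀ t_f) :=
    continuousOn_pi.2 fun i t ht => (hx t ht i).continuousAt.continuousWithinAt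
  have hPc : ContinuousOn P (Icc t₀ t_f) := continuousOn_pi.2 fun i => continuousOn_pi.2
    fun j t ht => (hP t ht i j).continuousAt.continuousWithinAt
  have hupc := continuous_pi hup
  have huec := continuous_pi hue
  rw [← hPtf]
  refine integral_add_eq_add_integral_sub_integral h (V := fun t => x t ⬝ᵥ (P t *ᵥ x t))
    (fun t ht => hasDerivAt_dotProduct (hx t ht) (hasDerivAt_mulVec (hP t ht) (hx t ht)))
    (fun t ht => cost_add_deriv_eq_of_riccati A B C Q hRpSymm hReSymm
      hRp.det_pos.ne'.isUnit hRe.det_pos.ne'.isUnit (hPsym t) (hPric t ht) (x t) (u_p t) (u_e t))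
    ?_ ?_ ?_ <;> fun_prop

/-- completion-of-squares form of the payoff. -/
theorem stmt12 {n m k : ℕ} (t₀ t_f : ℝ) (h : t₀ ≤ t_f)
    (A : Matrix (Fin n) (Fin n) ℝ) (B : Matrix (Fin n) (Fin m) ℝ)
    (C : Matrix (Fin n) (Fin k) ℝ)
    (Q Q_f : Matrix (Fin n) (Fin n) ℝ)
    (Rₚ : Matrix (Fin m) (Fin m) ℝ) (Rₑ : Matrix (Fin k) (Fin k) ℝ)
    (hQ : Q.PosSemidef) (hQf : Q_f.PosSemidef) (hRp : Rₚ.PosDef) (hRe : Rₑ.PosDef)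
    (hRpSymm : Rₚ.IsSymm) (hReSymm : Rₑ.IsSymm)
    (P P' : ℝ → Matrix (Fin n) (Fin n) ℝ)
    (hPsym : ∀ t, (P t).IsSymm)
    (hP : ∀ t ∈ Set.Icc t₀ t_f, ∀ i j, HasDerivAt (fun s => P s i j) (P' t i j) t)
    (hPric : ∀ t ∈ Set.Icc t₀ t_f, P' t + Aᵀ * P t + P t * A + Q
        + P t * (C * Rₑ⁻¹ * Cᵀ - B * Rₚ⁻¹ * Bᵀ) * P t = 0)
    (hPtf : P t_f = Q_f)
    (x : ℝ → Fin n → ℝ) (u_p : ℝ → Fin m → ℝ) (u_e : ℝ → Fin k → ℝ)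
    (hup : ∀ i, Continuous fun t => u_p t i)
    (hue : ∀ i, Continuous fun t => u_e t i)
    (hx : ∀ t ∈ Set.Icc t₀ t_f, ∀ i,
      HasDerivAt (fun s => x s i) ((A *ᵥ x t + B *ᵥ u_p t + C *ᵥ u_e t) i) t) :
    (∫ t in t₀..t_f, (x t ⬝ᵥ (Q *ᵥ x t) + u_p t ⬝ᵥ (Rₚ *ᵥ u_p t)
        - u_e t ⬝ᵥ (Rₑ *ᵥ u_e t))) + x t_f ⬝ᵥ (Q_f *ᵥ x t_f)
    = x t₀ ⬝ᵥ (P t₀ *ᵥ x t₀)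
      + (∫ t in t₀..t_f, ((u_p t + (Rₚ⁻¹ * Bᵀ * P t) *ᵥ x t)
          ⬝ᵥ (Rₚ *ᵥ (u_p t + (Rₚ⁻¹ * Bᵀ * P t) *ᵥ x t))))
      - ∫ t in t₀..t_f, ((u_e t - (Rₑ⁻¹ * Cᵀ * P t) *ᵥ x t)
          ⬝ᵥ (Rₑ *ᵥ (u_e t - (Rₑ⁻¹ * Cᵀ * P t) *ᵥ x t))) :=
  stmt12_general t₀ t_f h A B C Q Q_f Rₚ Rₑ hRp hRe hRpSymm hReSymm P P' hPsym hP hPric hPtf x u_p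
    u_e hup hue hx
end
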